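/- Let p be a prime and X = (V, E, s, t) a finite connected directed multigraph with V nonempty. Suppose some closed walk of X has nonzero weight, let d be the positive generator of the subgroup of ℤ generated by the weights of all closed walks of X, and let n₀ = v_p(d) be the p-adic valuation of d. Then for every n ≥ 0, the number of connected components of the derived graph X(ℤ/p^nℤ, α), where α is the constant voltage assignment with value 1, equals p^{min(n, n₀)}. In particular, the number of connected components equals p^{n₀} for all n ≥ n₀, and equals p^m for all 0 ≤ m ≤ n₀. -/

import Mathlib

/-- A directed multigraph: a vertex type `V`, an edge type `E`, and source/target maps. -/
structure DirMultigraph (V E : Type*) where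
  s : E → V
  t : E → V

/-- The adjacency relation: there is an edge with source `x` and target `y`. -/
def DirMultigraph.Adj {V E : Type*} (X : DirMultigraph V E) (x y : V) : Prop :=
  ∃ e, X.s e = x ∧ X.t e = y

/-- A directed multigraph is connected if any two vertices are related by the
reflexive-transitive-symmetric closure of the adjacency relation. -/
def DirMultigraph.Connected {V E : Type*} (X : DirMultigraph V E) : Prop :=
  ∀ x y : V, Relation.EqvGen X.Adj x y

/-- The set of connected components: the quotient of the vertex set by the
reflexive-transitive-symmetric closure of the adjacency relation. -/
def DirMultigraph.Components {V E : Type*} (X : DirMultigraph V E) : Type _ :=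
  Quot X.Adj

/-- The derived graph `X(G, α)` of a voltage assignment `α : E → G`: vertices `V × G`,
edges `E × G`, where the edge `(e, σ)` goes from `(s e, σ)` to `(t e, σ + α e)`. -/
def DirMultigraph.derived {V E G : Type*} [AddCommGroup G]
    (X : DirMultigraph V E) (α : E → G) : DirMultigraph (V × G) (E × G) where
  s := fun q => (X.s q.1, q.2)
  t := fun q => (X.t q.1, q.2 + α q.1)

/-- `WalkW X u v k` holds if there is a walk from `u` to `v` in which edges may be traversed
forwards or backwards, of weight `k` = (number of forwards steps) − (number of backwards
steps). -/
inductive DirMultigraph.WalkW {V E : Type*} (X : DirMultigraph V E) : V → V → ℤ → Prop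
  | nil (v : V) : WalkW X v v 0
  | fwd {u v w : V} {k : ℤ} (e : E) (h : WalkW X u v k) (hs : X.s e = v) (ht : X.t e = w) :
      WalkW X u w (k + 1)
  | bwd {u v w : V} {k : ℤ} (e : E) (h : WalkW X u v k) (ht : X.t e = v) (hs : X.s e = w) :
      WalkW X u w (k - 1)

/-!
Fix a base vertex `v₀` and a potential `k : V → ℤ`, the weight of some walk from `v₀` to each
vertex. Closed-walk weights are exactly the multiples of `d`, so the walks from `u` to `w` have
weights `k w - k u + dℤ`. Hence `(u, σ)` and `(w, τ)` lie in the same component of the derived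
graph of the constant voltage `g` iff `σ - k u • g ≡ τ - k w • g` modulo `d • g`, and the
components are in bijection with `G ⧸ ⟨d • g⟩`. For `G = ℤ/pⁿ` and `g = 1` this quotient has
`gcd(pⁿ, d) = p ^ min n (v_p d)` elements.
-/

namespace DirMultigraph

variable {V E : Type*} {X : DirMultigraph V E}

theorem WalkW.trans {u v w : V} {k l : ℤ} (h₁ : X.WalkW u v k) (h₂ : X.WalkW v w l) :
    X.WalkW u w (k + l) := by
  induction h₂ with
  | nil => simpa using h₁
  | fwd e _ hs ht ih => rw [← add_assoc]; exact ih.fwd e hs ht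
  | bwd e _ ht hs ih => rw [← add_sub_assoc]; exact ih.bwd e ht hs

theorem WalkW.single (e : E) : X.WalkW (X.s e) (X.t e) 1 := by
  simpa using (WalkW.nil (X.s e)).fwd e rfl rfl

theorem WalkW.single_rev (e : E) : X.WalkW (X.t e) (X.s e) (-1) := by
  simpa using (WalkW.nil (X.t e)).bwd e rfl rfl

theorem WalkW.symm {u v : V} {k : ℤ} (h : X.WalkW u v k) : X.WalkW v u (-k) := by
  induction h with
  | nil => simpa using WalkW.nil _
  | fwd e _ hs ht ih =>
    subst hs ht
    simpa [add_comm] using (WalkW.single_rev e).trans ih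
  | bwd e _ ht hs ih =>
    subst hs ht
    simpa [add_comm, sub_eq_add_neg] using (WalkW.single e).trans ih

theorem Connected.exists_walkW (hX : X.Connected) (x y : V) : ∃ k, X.WalkW x y k := by
  induction hX x y with
  | rel a b h => obtain ⟨e, rfl, rfl⟩ := h; exact ⟨1, WalkW.single e⟩
  | refl a => exact ⟨0, WalkW.nil a⟩
  | symm a b _ ih => obtain ⟨k, hk⟩ := ih; exact ⟨-k, hk.symm⟩
  | trans a b c _ _ ih₁ ih₂ =>
    obtain ⟨k, hk⟩ := ih₁
    obtain ⟨l, hl⟩ := ih₂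
    exact ⟨k + l, hk.trans hl⟩

variable (X) in
def loopWeights (v : V) : AddSubgroup ℤ where
  carrier := {m | X.WalkW v v m}
  zero_mem' := WalkW.nil v
  add_mem' := WalkW.trans
  neg_mem' := WalkW.symm

theorem Connected.loopWeights_eq_closure (hX : X.Connected) (v₀ : V) :
    X.loopWeights v₀ = AddSubgroup.closure {k : ℤ | ∃ v : V, X.WalkW v v k} := by
  refine le_antisymm (fun m hm => AddSubgroup.subset_closure ?_) ?_
  · exact ⟨v₀, hm⟩
  · rw [AddSubgroup.closure_le]
    rintro m ⟨v, hv⟩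
    obtain ⟨k, hk⟩ := hX.exists_walkW v₀ v
    show X.WalkW v₀ v₀ m
    simpa using (hk.trans hv).trans hk.symm

theorem Connected.walkW_iff_dvd (hX : X.Connected) {d : ℤ}
    (hgen : AddSubgroup.closure {k : ℤ | ∃ v : V, X.WalkW v v k} = AddSubgroup.zmultiples d)
    {v₀ : V} {k : V → ℤ} (hk : ∀ u, X.WalkW v₀ u (k u)) {u w : V} {m : ℤ} :
    X.WalkW u w m ↔ d ∣ k u + m - k w := by
  have hloop : ∀ l, X.WalkW v₀ v₀ l ↔ d ∣ l := fun l => by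
    rw [← Int.mem_zmultiples_iff, ← hgen, ← hX.loopWeights_eq_closure v₀]
    rfl
  constructor
  · intro h
    simpa [sub_eq_add_neg] using (hloop _).mp (((hk u).trans h).trans (hk w).symm)
  · intro h
    convert ((hk u).symm.trans ((hloop _).mpr h)).trans (hk w) using 1
    ring

section Derived

variable {G : Type*} [AddCommGroup G] (g : G)

theorem WalkW.eqvGen_derived_const {u w : V} {m : ℤ} (h : X.WalkW u w m) (σ : G) :
    Relation.EqvGen (X.derived fun _ => g).Adj (u, σ) (w, σ + m • g) := by
  induction h with
  | nil => simpa using Relation.EqvGen.refl _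
  | @fwd _ _ k e _ hs ht ih =>
    refine ih.trans _ _ _ (Relation.EqvGen.rel _ _ ⟨(e, σ + k • g), ?_, ?_⟩)
    · simp [derived, hs]
    · simp [derived, ht, add_smul, add_assoc]
  | @bwd _ _ k e _ ht hs ih =>
    refine ih.trans _ _ _ (Relation.EqvGen.symm _ _
      (Relation.EqvGen.rel _ _ ⟨(e, σ + (k - 1) • g), ?_, ?_⟩))
    · simp [derived, hs]
    · simp [derived, ht, sub_smul, add_assoc]

theorem eqvGen_derived_const_iff (a b : V × G) :
    Relation.EqvGen (X.derived fun _ => g).Adj a b ↔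
      ∃ m : ℤ, X.WalkW a.1 b.1 m ∧ b.2 = a.2 + m • g := by
  refine ⟨fun h => ?_, fun ⟨m, hm, hb⟩ => ?_⟩
  · induction h with
    | rel x y h =>
      obtain ⟨q, rfl, rfl⟩ := h
      exact ⟨1, WalkW.single q.1, by simp [derived]⟩
    | refl x => exact ⟨0, WalkW.nil _, by simp⟩
    | symm x y _ ih =>
      obtain ⟨m, hm, hy⟩ := ih
      exact ⟨-m, hm.symm, by rw [hy]; simp⟩
    | trans x y z _ _ ih₁ ih₂ =>
      obtain ⟨m, hm, hy⟩ := ih₁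
      obtain ⟨l, hl, hz⟩ := ih₂
      exact ⟨m + l, hm.trans hl, by rw [hz, hy, add_smul, add_assoc]⟩
  · obtain ⟨u, σ⟩ := a
    obtain ⟨w, τ⟩ := b
    dsimp only at hm hb
    exact hb ▸ hm.eqvGen_derived_const g σ

theorem Connected.eqvGen_derived_const_iff_mk_eq (hX : X.Connected) {d : ℤ}
    (hgen : AddSubgroup.closure {k : ℤ | ∃ v : V, X.WalkW v v k} = AddSubgroup.zmultiples d)
    {v₀ : V} {k : V → ℤ} (hk : ∀ u, X.WalkW v₀ u (k u)) (a b : V × G) :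
    Relation.EqvGen (X.derived fun _ => g).Adj a b ↔
      ((a.2 - k a.1 • g : G) : G ⧸ AddSubgroup.zmultiples (d • g)) = (b.2 - k b.1 • g : G) := by
  simp only [eqvGen_derived_const_iff, hX.walkW_iff_dvd hgen hk, QuotientAddGroup.eq,
    AddSubgroup.mem_zmultiples_iff]
  constructor
  · rintro ⟨m, ⟨c, hc⟩, hb⟩
    refine ⟨c, ?_⟩
    rw [hb, smul_smul, mul_comm, ← hc]
    simp only [add_smul, sub_smul]
    abel
  · rintro ⟨c, hc⟩
    refine ⟨d * c + k b.1 - k a.1, ⟨c, by ring⟩, ?_⟩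
    rw [smul_smul, mul_comm] at hc
    simp only [add_smul, sub_smul, hc]
    abel

theorem Connected.card_components_derived_const [Nonempty V] (hX : X.Connected) {d : ℤ}
    (hgen : AddSubgroup.closure {k : ℤ | ∃ v : V, X.WalkW v v k} = AddSubgroup.zmultiples d) :
    Nat.card (X.derived fun _ => g).Components = Nat.card (G ⧸ AddSubgroup.zmultiples (d • g)) := by
  obtain ⟨v₀⟩ := ‹Nonempty V›
  choose k hk using hX.exists_walkW v₀
  have hiff := hX.eqvGen_derived_const_iff_mk_eq g hgen hk
  let F : (X.derived fun _ => g).Components → G ⧸ AddSubgroup.zmultiples (d • g) :=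
    Quot.lift (fun a => ((a.2 - k a.1 • g : G) : G ⧸ _))
      fun a b h => (hiff a b).mp (Relation.EqvGen.rel _ _ h)
  refine Nat.card_congr (Equiv.ofBijective F ⟨?_, ?_⟩)
  · rintro ⟨a⟩ ⟨b⟩ h
    exact Quot.eq.mpr ((hiff a b).mpr h)
  · intro y
    obtain ⟨x, rfl⟩ := QuotientAddGroup.mk_surjective y
    exact ⟨Quot.mk _ (v₀, x + k v₀ • g), by simp [F]⟩

end Derived

end DirMultigraph

theorem ZMod.card_quotient_zmultiples_natCast {N : ℕ} (hN : N ≠ 0) (d : ℕ) :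
    Nat.card (ZMod N ⧸ AddSubgroup.zmultiples (d : ZMod N)) = N.gcd d := by
  have hcard := (AddSubgroup.zmultiples (d : ZMod N)).index_mul_card
  rw [Nat.card_zmultiples, ZMod.addOrderOf_coe d hN, Nat.card_zmod] at hcard
  have hN' := Nat.pos_of_ne_zero hN
  have hpos : 0 < N / N.gcd d := Nat.div_pos (Nat.gcd_le_left d hN') (Nat.gcd_pos_of_pos_left d hN')
  refine Nat.eq_of_mul_eq_mul_right hpos (hcard.trans ?_)
  exact (Nat.mul_div_cancel' (Nat.gcd_dvd_left N d)).symm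

theorem Nat.gcd_prime_pow_eq_pow_min {p : ℕ} [Fact p.Prime] {d : ℕ} (hd : d ≠ 0) (n : ℕ) :
    (p ^ n).gcd d = p ^ min n (padicValNat p d) := by
  have hp : p.Prime := Fact.out
  obtain ⟨j, hjn, hj⟩ := (Nat.dvd_prime_pow hp).mp (Nat.gcd_dvd_left (p ^ n) d)
  have hjd : j ≤ padicValNat p d := (padicValNat_dvd_iff_le hd).mp (hj ▸ Nat.gcd_dvd_right _ d)
  have hmin : p ^ min n (padicValNat p d) ∣ p ^ j := hj ▸ Nat.dvd_gcd
    (pow_dvd_pow p (min_le_left _ _)) ((pow_dvd_pow p (min_le_right _ _)).trans pow_padicValNat_dvd)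
  rw [hj, le_antisymm (le_min hjn hjd) ((Nat.pow_dvd_pow_iff_le_right hp.one_lt).mp hmin)]

theorem card_components_derived_eq_pow_min_general {p : ℕ} [Fact p.Prime] {V E : Type*}
    [Nonempty V] (X : DirMultigraph V E) (hX : X.Connected)
    (d : ℕ) (hd : 0 < d)
    (hgen : AddSubgroup.closure {k : ℤ | ∃ v : V, X.WalkW v v k}
      = AddSubgroup.zmultiples (d : ℤ)) :
    ∀ n : ℕ,
      Nat.card (X.derived (fun _ : E => (1 : ZMod (p ^ n)))).Components
        = p ^ (min n (padicValNat p d)) := by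
  intro n
  have hp : p.Prime := Fact.out
  rw [hX.card_components_derived_const 1 hgen, natCast_zsmul, nsmul_one,
    ZMod.card_quotient_zmultiples_natCast (pow_ne_zero n hp.ne_zero),
    Nat.gcd_prime_pow_eq_pow_min hd.ne']

/-- Let `X` be a finite connected directed multigraph admitting a closed walk of nonzero
weight, let `d > 0` be the positive generator of the subgroup of `ℤ` generated by the weights
of all closed walks of `X`, and let `n₀ = v_p(d)`. Then for every `n ≥ 0`, the number of
connected components of the derived graph `X(ℤ/pⁿℤ, α)` of the constant voltage assignment
with value `1` equals `p^min(n, n₀)`; in particular it equals `p^n₀` for `n ≥ n₀` and `p^m`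
for `0 ≤ m ≤ n₀`. -/
theorem card_components_derived_eq_pow_min {p : ℕ} [Fact p.Prime] {V E : Type*}
    [Fintype V] [Fintype E] [Nonempty V] (X : DirMultigraph V E) (hX : X.Connected)
    (hex : ∃ (v : V) (k : ℤ), X.WalkW v v k ∧ k ≠ 0)
    (d : ℕ) (hd : 0 < d)
    (hgen : AddSubgroup.closure {k : ℤ | ∃ v : V, X.WalkW v v k}
      = AddSubgroup.zmultiples (d : ℤ)) :
    ∀ n : ℕ,
      Nat.card (X.derived (fun _ : E => (1 : ZMod (p ^ n)))).Components
        = p ^ (min n (padicValNat p d)) :=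
  card_components_derived_eq_pow_min_general X hX d hd hgen
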